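/- arXiv:1611.08514 — 6 statements merged into one kernel-verified Lean document; each statement's English description precedes it below -/
import Mathlib

section
/- Let Q be an (N+1)×(N+1) matrix with superdiagonal entries Q_{i,i+1} = c_i for 0 ≤ i ≤ N-1, first-column entries Q_{i,0} = b_i for 1 ≤ i ≤ N, and all other entries zero. Then det(I - Q) = 1 - Σ_{j=1}^{N} (c_0 c_1 ⋯ c_{j-1}) b_j. -/
open Finset Matrix

/-!
Add to row `0` of `1 - Q` the combination of all rows with weights `w i = c 0 ⋯ c (i-1)`.
Since `w (i+1) = w i * c i`, the superdiagonal contributions telescope away and row `0` becomes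
`(1 - ∑ j, w j * b j) • e₀`, while the weights leave the determinant unchanged because `w 0 = 1`.
Expanding along row `0` leaves the minor of `1 - Q` at `(0, 0)`, which is upper unitriangular.
-/

theorem Finset.sum_Icc_one_eq_sum_fin {M : Type*} [AddCommMonoid M] (f : ℕ → M) (n : ℕ) :
    ∑ j ∈ Icc 1 n, f j = ∑ i : Fin n, f (i + 1) := by
  rw [← Ico_add_one_right_eq_Icc, sum_Ico_eq_sum_range, Nat.add_sub_cancel,
    ← Fin.sum_univ_eq_sum_range]
  simp only [add_comm 1]

theorem Matrix.det_updateRow_zero_single {R : Type*} [CommRing R] {n : ℕ}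
    (A : Matrix (Fin (n + 1)) (Fin (n + 1)) R) (a : R) :
    (A.updateRow 0 (Pi.single 0 a)).det = a * (A.submatrix Fin.succ Fin.succ).det := by
  rw [det_succ_row_zero, Fin.sum_univ_succ, ← Fin.succAbove_zero,
    submatrix_updateRow_succAbove]
  simp [Fin.succ_ne_zero]

def repairMatrix {R : Type*} [Zero R] (N : ℕ) (c b : ℕ → R) :
    Matrix (Fin (N + 1)) (Fin (N + 1)) R :=
  of fun i j => if (j : ℕ) = i + 1 then c i else if (j : ℕ) = 0 ∧ 1 ≤ (i : ℕ) then b i else 0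

namespace repairMatrix

variable {R : Type*} [CommRing R] (N : ℕ) (c b : ℕ → R)

theorem det_submatrix_succ_one_sub :
    ((1 - repairMatrix N c b).submatrix Fin.succ Fin.succ).det = 1 := by
  rw [det_of_isUpperTriangular]
  · simp [repairMatrix]
  · intro i j (hji : j < i)
    have : (j : ℕ) < i := hji
    simp [repairMatrix, one_apply, hji.ne', show (j : ℕ) ≠ i + 1 by omega]

theorem sum_prod_smul_row_one_sub :
    ∑ i : Fin (N + 1), (∏ k ∈ range i, c k) • (1 - repairMatrix N c b) i =
      Pi.single 0 (1 - ∑ j ∈ Icc 1 N, (∏ k ∈ range j, c k) * b j) := by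
  ext s
  induction s using Fin.cases with
  | zero =>
    simp [repairMatrix, one_apply, Fin.sum_univ_succ, Fin.succ_ne_zero, sum_Icc_one_eq_sum_fin,
      sub_eq_add_neg]
  | succ t =>
    have h (x : Fin (N + 1)) : (t : ℕ) = x ↔ x = t.castSucc := by simp [Fin.ext_iff, eq_comm]
    simp [repairMatrix, one_apply, Fin.succ_ne_zero, mul_sub, prod_range_succ, h]

theorem det_one_sub :
    (1 - repairMatrix N c b).det = 1 - ∑ j ∈ Icc 1 N, (∏ k ∈ range j, c k) * b j := by
  calc (1 - repairMatrix N c b).det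
      = ((1 - repairMatrix N c b).updateRow 0
          (∑ i : Fin (N + 1), (∏ k ∈ range i, c k) • (1 - repairMatrix N c b) i)).det := by
        rw [det_updateRow_sum]; simp
    _ = 1 - ∑ j ∈ Icc 1 N, (∏ k ∈ range j, c k) * b j := by
        rw [sum_prod_smul_row_one_sub, det_updateRow_zero_single, det_submatrix_succ_one_sub,
          mul_one]

end repairMatrix

/-- Determinant identity for the parallel-repair transient transition matrix:
`Q` has superdiagonal entries `c i` and first-column entries `b i` (for `i ≥ 1`),
and `det (I - Q) = 1 - ∑_{j=1}^N (∏_{i<j} c i) * b j`. -/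
theorem parallel_repair_det (N : ℕ) (c b : ℕ → ℝ)
    (Q : Matrix (Fin (N + 1)) (Fin (N + 1)) ℝ)
    (hQ : ∀ i j : Fin (N + 1),
      Q i j = if (j : ℕ) = (i : ℕ) + 1 then c i
              else if (j : ℕ) = 0 ∧ 1 ≤ (i : ℕ) then b i else 0) :
    (1 - Q).det = 1 - ∑ j ∈ Finset.Icc 1 N, (∏ i ∈ Finset.range j, c i) * b j := by
  obtain rfl : Q = repairMatrix N c b := Matrix.ext hQ
  exact repairMatrix.det_one_sub N c b
end

section
/- For the parallel repair model, the Laplace–Stieltjes transform of the time to data loss satisfies P_a(s) = (∏_{i=0}^{n-k} c_i(s)) / (1 - Σ_{j=1}^{n-k} (∏_{i=0}^{j-1} c_i(s)) b_j(s)), where c_0(s) = nλ/(s+nλ), c_i(s) = ((n-i)λ/((n-i)λ+s))(1 - e^{-((n-i)λ+s)t_rep}) for 1 ≤ i ≤ n-k, and b_j(s) = e^{-((n-j)λ+s)t_rep} for 1 ≤ j ≤ n-k; moreover the denominator is positive for all s ≥ 0 when n > k ≥ 1, λ > 0, t_rep > 0. -/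
open Real Finset

private lemma tele_sum (P : ℕ → ℝ) (m : ℕ) :
    ∑ j ∈ Finset.Icc 1 m, (P j - P (j+1)) = P 1 - P (m+1) := by
  induction m with
  | zero => simp
  | succ m ih =>
      rw [Finset.sum_Icc_succ_top (by omega), ih]; ring

/-- Parallel repair model (Theorem 2): with the explicit one-step transforms
`c i s` (upward) and `b j s` (repair, back to state 0), the denominator
`1 - ∑_{j=1}^{n-k} (∏_{i<j} c i s) * b j s` of the Laplace–Stieltjes transform
`P_a(s) = (∏_{i=0}^{n-k} c i s) / (1 - ∑_{j=1}^{n-k} (∏_{i<j} c i s) * b j s)`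
is positive for every `s ≥ 0`. -/
theorem parallel_repair_denominator_pos (n k : ℕ) (hk : 1 ≤ k) (hkn : k < n)
    (lam t_rep : ℝ) (hlam : 0 < lam) (ht : 0 < t_rep)
    (c b : ℕ → ℝ → ℝ)
    (hc0 : ∀ s : ℝ, c 0 s = (n : ℝ) * lam / (s + (n : ℝ) * lam))
    (hc : ∀ i : ℕ, 1 ≤ i → i ≤ n - k → ∀ s : ℝ,
      c i s = ((n - i : ℕ) : ℝ) * lam / (((n - i : ℕ) : ℝ) * lam + s) *
        (1 - Real.exp (-((((n - i : ℕ) : ℝ) * lam + s) * t_rep))))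
    (hb : ∀ j : ℕ, 1 ≤ j → j ≤ n - k → ∀ s : ℝ,
      b j s = Real.exp (-((((n - j : ℕ) : ℝ) * lam + s) * t_rep))) :
    ∀ s : ℝ, 0 ≤ s →
      0 < 1 - ∑ j ∈ Finset.Icc 1 (n - k), (∏ i ∈ Finset.range j, c i s) * b j s := by
  intro s hs
  set m := n - k with hm
  have hm1 : 1 ≤ m := by omega
  -- positivity of each c i s for i ≤ m
  have hcpos : ∀ i : ℕ, i ≤ m → 0 < c i s := by
    intro i hi
    rcases Nat.eq_zero_or_pos i with rfl | hi1
    · rw [hc0]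
      have hn1 : (1:ℝ) ≤ (n:ℝ) := by exact_mod_cast (by omega : 1 ≤ n)
      have hn : (0:ℝ) < (n:ℝ) * lam := by nlinarith
      exact div_pos hn (by linarith)
    · rw [hc i hi1 hi]
      have hni : (1:ℝ) ≤ ((n - i : ℕ) : ℝ) := by
        have : 1 ≤ n - i := by omega
        exact_mod_cast this
      have ha : (0:ℝ) < ((n - i : ℕ) : ℝ) * lam := by nlinarith
      have has : (0:ℝ) < ((n - i : ℕ) : ℝ) * lam + s := by linarith
      have he : Real.exp (-((((n - i : ℕ) : ℝ) * lam + s) * t_rep)) < 1 := by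
        rw [Real.exp_lt_one_iff]
        nlinarith
      exact mul_pos (div_pos ha has) (by linarith)
  -- c 0 s ≤ 1
  have hc0le : c 0 s ≤ 1 := by
    rw [hc0]
    have hn1 : (1:ℝ) ≤ (n:ℝ) := by exact_mod_cast (by omega : 1 ≤ n)
    have hn : (0:ℝ) < (n:ℝ) * lam := by nlinarith
    exact div_le_one_of_le₀ (by linarith) (by linarith)
  -- b j s ≤ 1 - c j s for 1 ≤ j ≤ m
  have hbc : ∀ j : ℕ, 1 ≤ j → j ≤ m → b j s ≤ 1 - c j s := by
    intro j hj1 hjm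
    rw [hc j hj1 hjm, hb j hj1 hjm]
    set a : ℝ := ((n - j : ℕ) : ℝ) * lam with ha_def
    have hnj : (1:ℝ) ≤ ((n - j : ℕ) : ℝ) := by
      have : 1 ≤ n - j := by omega
      exact_mod_cast this
    have ha : (0:ℝ) < a := by nlinarith
    have has : (0:ℝ) < a + s := by linarith
    set e : ℝ := Real.exp (-((a + s) * t_rep)) with he_def
    have he0 : 0 < e := Real.exp_pos _
    have he1 : e < 1 := by
      rw [he_def, Real.exp_lt_one_iff]; nlinarith
    have hfrac : a / (a + s) ≤ 1 := div_le_one_of_le₀ (by linarith) (by linarith)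
    nlinarith [mul_le_one₀ hfrac (by linarith : (0:ℝ) ≤ 1 - e) (by linarith : (1:ℝ) - e ≤ 1)]
  -- products
  set P : ℕ → ℝ := fun j => ∏ i ∈ Finset.range j, c i s with hP
  have hPpos : ∀ j : ℕ, j ≤ m + 1 → 0 < P j := by
    intro j hj
    exact Finset.prod_pos fun i hi => hcpos i (by simp at hi; omega)
  have hterm : ∀ j ∈ Finset.Icc 1 m, P j * b j s ≤ P j - P (j+1) := by
    intro j hj
    simp only [Finset.mem_Icc] at hj
    have hPj : 0 < P j := hPpos j (by omega)
    have : P (j+1) = P j * c j s := Finset.prod_range_succ _ _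
    rw [this]
    nlinarith [hbc j hj.1 hj.2]
  have hsum : ∑ j ∈ Finset.Icc 1 m, P j * b j s ≤ P 1 - P (m+1) := by
    calc ∑ j ∈ Finset.Icc 1 m, P j * b j s
        ≤ ∑ j ∈ Finset.Icc 1 m, (P j - P (j+1)) := Finset.sum_le_sum hterm
      _ = P 1 - P (m+1) := tele_sum P m
  have hP1 : P 1 ≤ 1 := by simpa [hP] using hc0le
  have hPm : 0 < P (m+1) := hPpos (m+1) le_rfl
  linarith
end

section
/- Chen's mean time to data loss for the serial exponential repair model, MTDL_Chen = Σ_{l=0}^{n-k} (1/(n-l)!) Σ_{i=0}^{n-k-l} μ^i λ^{-(i+1)} (n-l-i-1)!, satisfies lim_{μ→∞} MTDL_Chen / (μ^{n-k}/λ^{n-k+1}) = (k-1)!/n!. -/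
open Filter Finset

/-! After dividing by `μ^{n-k}/λ^{n-k+1}`, the `(l, i)` term of the double sum is a constant times
`μ^i / μ^{n-k}` with `i ≤ n-k`. Each such quotient tends to `0` unless `i = n-k`, which happens only
for `l = 0`, so the limit is the coefficient of that single term, `(k-1)!/n!`. -/

theorem tendsto_pow_div_pow_atTop_of_le {𝕜 : Type*} [Field 𝕜] [LinearOrder 𝕜]
    [IsStrictOrderedRing 𝕜] [TopologicalSpace 𝕜] [OrderTopology 𝕜] {p q : ℕ} (hpq : p ≤ q) :
    Tendsto (fun x : 𝕜 => x ^ p / x ^ q) atTop (nhds (if p = q then 1 else 0)) := by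
  rcases hpq.eq_or_lt with rfl | hlt
  · rw [if_pos rfl]
    refine tendsto_const_nhds.congr' ?_
    filter_upwards [eventually_gt_atTop 0] with x hx
    exact (div_self (pow_ne_zero p hx.ne')).symm
  · simpa [hlt.ne] using tendsto_pow_div_pow_atTop_zero hlt

theorem sum_range_sum_range_sub_ite_eq {M : Type*} [AddCommMonoid M] (m : ℕ) (f : ℕ → ℕ → M) :
    ∑ l ∈ range (m + 1), ∑ i ∈ range (m - l + 1), (if i = m then f l i else 0) = f 0 m := by
  simp only [sum_ite_eq', mem_range]
  rw [sum_eq_single 0] <;> simp +contextual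
  all_goals omega

theorem chen_mtdl_asymptotics_general (n k : ℕ) (hkn : k < n)
    (lam : ℝ) (hlam : 0 < lam) :
    Filter.Tendsto
      (fun mu : ℝ =>
        (∑ l ∈ Finset.range (n - k + 1), (1 / (Nat.factorial (n - l) : ℝ)) *
            ∑ i ∈ Finset.range (n - k - l + 1),
              mu ^ i * (lam ^ (i + 1))⁻¹ * (Nat.factorial (n - l - i - 1) : ℝ)) /
          (mu ^ (n - k) / lam ^ (n - k + 1)))
      atTop (nhds ((Nat.factorial (k - 1) : ℝ) / (Nat.factorial n : ℝ))) := by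
  set m := n - k
  set c : ℕ → ℕ → ℝ := fun l i =>
    lam ^ (m + 1) / lam ^ (i + 1) * (Nat.factorial (n - l - i - 1) / Nat.factorial (n - l))
  have ratio_eq : ∀ mu : ℝ,
      (∑ l ∈ range (m + 1), (1 / (Nat.factorial (n - l) : ℝ)) *
          ∑ i ∈ range (m - l + 1), mu ^ i * (lam ^ (i + 1))⁻¹ * (Nat.factorial (n - l - i - 1) : ℝ)) /
        (mu ^ m / lam ^ (m + 1)) =
      ∑ l ∈ range (m + 1), ∑ i ∈ range (m - l + 1), c l i * (mu ^ i / mu ^ m) := by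
    intro mu
    simp only [div_div_eq_mul_div, sum_div, sum_mul, mul_sum, c]
    refine sum_congr rfl fun l _ => sum_congr rfl fun i _ => ?_
    ring
  have limit_eq : ∑ l ∈ range (m + 1), ∑ i ∈ range (m - l + 1),
      c l i * (if i = m then 1 else 0) = (Nat.factorial (k - 1) : ℝ) / Nat.factorial n := by
    simp only [mul_ite, mul_one, mul_zero, sum_range_sum_range_sub_ite_eq, c]
    rw [div_self (pow_ne_zero _ hlam.ne'), one_mul, Nat.sub_zero, Nat.sub_sub,
      show n - (m + 1) = k - 1 by omega]
  simp only [ratio_eq, ← limit_eq]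
  refine tendsto_finsetSum _ fun _ _ => tendsto_finsetSum _ fun i hi => ?_
  exact tendsto_const_nhds.mul (tendsto_pow_div_pow_atTop_of_le (by grind))

/-- Dominant term of Chen's MTDL for serial exponential repair as `μ → ∞`:
`MTDL_Chen / (μ^{n-k}/λ^{n-k+1}) → (k-1)!/n!`. -/
theorem chen_mtdl_asymptotics (n k : ℕ) (hk : 1 ≤ k) (hkn : k < n)
    (lam : ℝ) (hlam : 0 < lam) :
    Filter.Tendsto
      (fun mu : ℝ =>
        (∑ l ∈ Finset.range (n - k + 1), (1 / (Nat.factorial (n - l) : ℝ)) *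
            ∑ i ∈ Finset.range (n - k - l + 1),
              mu ^ i * (lam ^ (i + 1))⁻¹ * (Nat.factorial (n - l - i - 1) : ℝ)) /
          (mu ^ (n - k) / lam ^ (n - k + 1)))
      atTop (nhds ((Nat.factorial (k - 1) : ℝ) / (Nat.factorial n : ℝ))) :=
  chen_mtdl_asymptotics_general n k hkn lam hlam
end

section
/- Angus's mean time to data loss for the parallel exponential repair model, MTDL_Angus = Σ_{l=0}^{n-k} (1/(n-l)!) Σ_{i=0}^{n-k-l} μ^i λ^{-(i+1)} (n-l-i-1)! i!, satisfies lim_{μ→∞} MTDL_Angus / MTDL_Chen = (n-k)!, where MTDL_Chen = Σ_{l=0}^{n-k} (1/(n-l)!) Σ_{i=0}^{n-k-l} μ^i λ^{-(i+1)} (n-l-i-1)!. -/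
open Real Filter Finset

lemma pow_ratio_tendsto (i d : ℕ) (h : i ≤ d) :
    Filter.Tendsto (fun mu : ℝ => mu ^ i / mu ^ d) atTop
      (nhds (if i = d then 1 else 0)) := by
  rcases eq_or_lt_of_le h with rfl | hlt
  · simp only [if_pos rfl]
    refine tendsto_const_nhds.congr' ?_
    filter_upwards [eventually_gt_atTop (0:ℝ)] with mu hmu
    rw [div_self (pow_ne_zero _ hmu.ne')]
    simp
  · rw [if_neg hlt.ne]
    have h0 : Filter.Tendsto (fun mu : ℝ => (mu ^ (d - i))⁻¹) atTop (nhds 0) :=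
      (tendsto_pow_atTop (by omega)).inv_tendsto_atTop
    refine h0.congr' ?_
    filter_upwards [eventually_gt_atTop (0:ℝ)] with mu hmu
    rw [eq_div_iff (pow_ne_zero _ hmu.ne'), inv_mul_eq_div,
      div_eq_iff (pow_ne_zero _ hmu.ne'), ← pow_add]
    congr 1
    omega

lemma sum_div_pow_tendsto (d : ℕ) (hd : 1 ≤ d) (c : ℕ → ℕ → ℝ) :
    Filter.Tendsto
      (fun mu : ℝ =>
        (∑ l ∈ Finset.range (d + 1), ∑ i ∈ Finset.range (d - l + 1), c l i * mu ^ i)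
          / mu ^ d)
      atTop (nhds (c 0 d)) := by
  have key : ∀ mu : ℝ,
      (∑ l ∈ Finset.range (d + 1), ∑ i ∈ Finset.range (d - l + 1), c l i * mu ^ i)
          / mu ^ d
        = ∑ l ∈ Finset.range (d + 1), ∑ i ∈ Finset.range (d - l + 1),
            c l i * (mu ^ i / mu ^ d) := by
    intro mu
    rw [Finset.sum_div]
    refine Finset.sum_congr rfl fun l _ => ?_
    rw [Finset.sum_div]
    exact Finset.sum_congr rfl fun i _ => by rw [mul_div_assoc]
  simp only [key]
  have main : Filter.Tendsto
      (fun mu : ℝ => ∑ l ∈ Finset.range (d + 1), ∑ i ∈ Finset.range (d - l + 1),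
          c l i * (mu ^ i / mu ^ d)) atTop
      (nhds (∑ l ∈ Finset.range (d + 1), ∑ i ∈ Finset.range (d - l + 1),
          c l i * (if i = d then (1:ℝ) else 0))) := by
    refine tendsto_finset_sum _ fun l hl => tendsto_finset_sum _ fun i hi => ?_
    have hi' : i ≤ d := by
      simp only [Finset.mem_range] at hi
      omega
    exact (pow_ratio_tendsto i d hi').const_mul _
  convert main using 2
  have inner : ∀ l, (∑ i ∈ Finset.range (d - l + 1),
      c l i * (if i = d then (1:ℝ) else 0))
      = if d ∈ Finset.range (d - l + 1) then c l d else 0 := by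
    intro l
    rw [← Finset.sum_ite_eq' (Finset.range (d - l + 1)) d (fun i => c l i)]
    exact Finset.sum_congr rfl fun i _ => by split <;> simp_all
  simp only [inner]
  rw [Finset.sum_eq_single 0]
  · rw [if_pos (by simp)]
  · intro l hl hl0
    rw [if_neg]
    simp only [Finset.mem_range] at hl ⊢
    omega
  · intro h
    exact absurd (Finset.mem_range.mpr (by omega)) h

/-- Angus's parallel-exponential-repair MTDL is asymptotically `(n-k)!` times
Chen's serial-repair MTDL as `μ → ∞`. -/
theorem angus_over_chen_asymptotics (n k : ℕ) (hk : 1 ≤ k) (hkn : k < n)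
    (lam : ℝ) (hlam : 0 < lam) :
    Filter.Tendsto
      (fun mu : ℝ =>
        (∑ l ∈ Finset.range (n - k + 1), (1 / (Nat.factorial (n - l) : ℝ)) *
            ∑ i ∈ Finset.range (n - k - l + 1),
              mu ^ i * (lam ^ (i + 1))⁻¹ * (Nat.factorial (n - l - i - 1) : ℝ) *
                (Nat.factorial i : ℝ)) /
        (∑ l ∈ Finset.range (n - k + 1), (1 / (Nat.factorial (n - l) : ℝ)) *
            ∑ i ∈ Finset.range (n - k - l + 1),
              mu ^ i * (lam ^ (i + 1))⁻¹ * (Nat.factorial (n - l - i - 1) : ℝ)))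
      atTop (nhds (Nat.factorial (n - k) : ℝ)) := by
  set d := n - k with hdd
  have hd : 1 ≤ d := by omega
  set cN : ℕ → ℕ → ℝ := fun l i =>
    (1 / (Nat.factorial (n - l) : ℝ)) * ((lam ^ (i + 1))⁻¹ *
      ((Nat.factorial (n - l - i - 1) : ℝ) * (Nat.factorial i : ℝ))) with hcN
  set cD : ℕ → ℕ → ℝ := fun l i =>
    (1 / (Nat.factorial (n - l) : ℝ)) * ((lam ^ (i + 1))⁻¹ *
      (Nat.factorial (n - l - i - 1) : ℝ)) with hcD
  have hNeq : ∀ mu : ℝ,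
      (∑ l ∈ Finset.range (d + 1), (1 / (Nat.factorial (n - l) : ℝ)) *
          ∑ i ∈ Finset.range (d - l + 1),
            mu ^ i * (lam ^ (i + 1))⁻¹ * (Nat.factorial (n - l - i - 1) : ℝ) *
              (Nat.factorial i : ℝ))
        = ∑ l ∈ Finset.range (d + 1), ∑ i ∈ Finset.range (d - l + 1), cN l i * mu ^ i := by
    intro mu
    refine Finset.sum_congr rfl fun l _ => ?_
    rw [Finset.mul_sum]
    exact Finset.sum_congr rfl fun i _ => by simp only [hcN]; ring
  have hDeq : ∀ mu : ℝ,
      (∑ l ∈ Finset.range (d + 1), (1 / (Nat.factorial (n - l) : ℝ)) *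
          ∑ i ∈ Finset.range (d - l + 1),
            mu ^ i * (lam ^ (i + 1))⁻¹ * (Nat.factorial (n - l - i - 1) : ℝ))
        = ∑ l ∈ Finset.range (d + 1), ∑ i ∈ Finset.range (d - l + 1), cD l i * mu ^ i := by
    intro mu
    refine Finset.sum_congr rfl fun l _ => ?_
    rw [Finset.mul_sum]
    exact Finset.sum_congr rfl fun i _ => by simp only [hcD]; ring
  have hN := sum_div_pow_tendsto d hd cN
  have hD := sum_div_pow_tendsto d hd cD
  have hcD0 : cD 0 d ≠ 0 := by
    simp only [hcD]
    positivity
  have hdiv := hN.div hD hcD0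
  have hval : cN 0 d / cD 0 d = (Nat.factorial (n - k) : ℝ) := by
    have h1 : cN 0 d = cD 0 d * (Nat.factorial d : ℝ) := by
      simp only [hcN, hcD]; ring
    rw [h1, mul_comm, mul_div_assoc, div_self hcD0, mul_one, hdd]
  rw [← hval]
  refine hdiv.congr' ?_
  filter_upwards [eventually_gt_atTop (0:ℝ)] with mu hmu
  have hp : (mu ^ d) ≠ 0 := pow_ne_zero _ hmu.ne'
  simp only [Pi.div_apply]
  rw [hNeq mu, hDeq mu, div_div_div_cancel_right₀ hp]
end

section
/- In the serial repair model with n - k = 1 (single-fault tolerance), the transform simplifies to P_c(s) = c_0(s) c_1(s) / (1 - c_0(s) b_1(s)) where c_0(s) = nλ/(s+nλ), c_1(s) = ((n-1)λ/((n-1)λ+s))(1 - e^{-((n-1)λ+s)t_rep}), b_1(s) = e^{-((n-1)λ+s)t_rep}; and the mean time to data loss MTDL = -P_c'(0) equals [1/(nλ) + (1 - e^{-(n-1)λ t_rep})/((n-1)λ)] / (1 - e^{-(n-1)λ t_rep}). -/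
/-!
A cycle starts in state 0, stays there for an `Exp(nλ)` time (transform `c₀`), then either
loses data before repair (`c₁`) or is repaired at `t_rep` and starts afresh (`b₁`), whence
`P_c = c₀ c₁ / (1 - c₀ b₁)`. Differentiating at `0`, where `c₀ = 1` and `c₁ + b₁ = 1`, gives
`-P_c'(0) = -(c₀ + c₁ + b₁)'(0) / (1 - b₁(0))`: the mean cycle length divided by the
probability that a cycle ends in data loss.
-/

open Real

theorem HasDerivAt.renewal_ratio {u v w : ℝ → ℝ} {u' v' w' x : ℝ}
    (hu : HasDerivAt u u' x) (hv : HasDerivAt v v' x) (hw : HasDerivAt w w' x)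
    (hu1 : u x = 1) (hvw : v x + w x = 1) (hw1 : w x ≠ 1) :
    HasDerivAt (fun s => u s * v s / (1 - u s * w s)) ((u' + v' + w') / (1 - w x)) x := by
  have hw1' : 1 - w x ≠ 0 := sub_ne_zero.mpr hw1.symm
  have hden : 1 - u x * w x ≠ 0 := by rwa [hu1, one_mul]
  refine ((hu.fun_mul hv).fun_div ((hasDerivAt_const x 1).fun_sub (hu.fun_mul hw))
    hden).congr_deriv ?_
  rw [hu1, show v x = 1 - w x by linarith]
  field_simp
  ring

theorem hasDerivAt_div_add_self_zero {a : ℝ} (ha : a ≠ 0) :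
    HasDerivAt (fun s => a / (a + s)) (-a⁻¹) 0 := by
  refine ((hasDerivAt_const 0 a).fun_div ((hasDerivAt_id (0 : ℝ)).const_add a)
    (by simpa using ha)).congr_deriv ?_
  simp only [id, add_zero]
  field_simp
  ring

theorem hasDerivAt_exp_neg_add_mul_zero (b t : ℝ) :
    HasDerivAt (fun s => exp (-((b + s) * t))) (-t * exp (-(b * t))) 0 := by
  refine (((hasDerivAt_id (0 : ℝ)).const_add b).mul_const t).neg.exp.congr_deriv ?_
  simp [mul_comm]

/-- Single-fault-tolerant serial model (`n - k = 1`): with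
`P_c(s) = c_0(s) c_1(s) / (1 - c_0(s) b_1(s))`, the mean time to data loss
`-P_c'(0)` equals
`[1/(nλ) + (1 - e^{-(n-1)λ t})/((n-1)λ)] / (1 - e^{-(n-1)λ t})`. -/
theorem single_fault_mtdl (n : ℕ) (hn : 2 ≤ n) (lam t_rep : ℝ)
    (hlam : 0 < lam) (ht : 0 < t_rep)
    (c0 c1 b1 : ℝ → ℝ)
    (hc0 : ∀ s : ℝ, c0 s = (n : ℝ) * lam / (s + (n : ℝ) * lam))
    (hc1 : ∀ s : ℝ, c1 s = ((n : ℝ) - 1) * lam / (((n : ℝ) - 1) * lam + s) *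
      (1 - Real.exp (-((((n : ℝ) - 1) * lam + s) * t_rep))))
    (hb1 : ∀ s : ℝ, b1 s = Real.exp (-((((n : ℝ) - 1) * lam + s) * t_rep))) :
    -(deriv (fun s : ℝ => c0 s * c1 s / (1 - c0 s * b1 s)) 0) =
      (1 / ((n : ℝ) * lam) +
          (1 - Real.exp (-(((n : ℝ) - 1) * lam * t_rep))) / (((n : ℝ) - 1) * lam)) /
        (1 - Real.exp (-(((n : ℝ) - 1) * lam * t_rep))) := by
  set a : ℝ := (n : ℝ) * lam
  set b : ℝ := ((n : ℝ) - 1) * lam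
  have ha : a ≠ 0 := by positivity
  have hb : b ≠ 0 := (mul_pos (by linarith [show (2 : ℝ) ≤ n by exact_mod_cast hn]) hlam).ne'
  have he : exp (-(b * t_rep)) ≠ 1 := by
    rw [Ne, exp_eq_one_iff, neg_eq_zero]
    exact mul_ne_zero hb ht.ne'
  have hc0' : HasDerivAt c0 (-a⁻¹) 0 := by
    rw [show c0 = fun s => a / (a + s) from funext fun s => by rw [hc0, add_comm]]
    exact hasDerivAt_div_add_self_zero ha
  have hc1' :
      HasDerivAt c1 (-b⁻¹ * (1 - exp (-(b * t_rep))) + t_rep * exp (-(b * t_rep))) 0 := by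
    rw [funext hc1]
    refine ((hasDerivAt_div_add_self_zero hb).fun_mul
      ((hasDerivAt_exp_neg_add_mul_zero b t_rep).const_sub 1)).congr_deriv ?_
    simp [hb]
  have hb1' : HasDerivAt b1 (-t_rep * exp (-(b * t_rep))) 0 := by
    rw [funext hb1]
    exact hasDerivAt_exp_neg_add_mul_zero b t_rep
  have hP := hc0'.renewal_ratio hc1' hb1' (by simp [hc0, ha]) (by simp [hc1, hb1, hb])
    (by simpa [hb1] using he)
  rw [hP.deriv, hb1, add_zero]
  field_simp
  ring
end

section
/- For n ≥ 2, λ > 0, for the single-fault-tolerant system (k = n-1), lim_{t_rep→0⁺} λ² t_rep · MTDL(t_rep) = 1/(n(n-1)), where MTDL(t_rep) = [1/(nλ) + (1 - e^{-(n-1)λ t_rep})/((n-1)λ)] / (1 - e^{-(n-1)λ t_rep}). -/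
open Real Filter

/-- For the single-fault-tolerant system (`k = n - 1`),
`λ² t_rep · MTDL(t_rep) → 1/(n(n-1))` as `t_rep → 0⁺`. -/
theorem single_fault_mtdl_asymptotics (n : ℕ) (hn : 2 ≤ n) (lam : ℝ) (hlam : 0 < lam) :
    Filter.Tendsto
      (fun t : ℝ =>
        lam ^ 2 * t *
          ((1 / ((n : ℝ) * lam) +
              (1 - Real.exp (-(((n : ℝ) - 1) * lam * t))) / (((n : ℝ) - 1) * lam)) /
            (1 - Real.exp (-(((n : ℝ) - 1) * lam * t)))))
      (nhdsWithin 0 (Set.Ioi 0))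
      (nhds (1 / ((n : ℝ) * ((n : ℝ) - 1)))) := by
  have hn1 : (1 : ℝ) ≤ (n : ℝ) - 1 := by
    have : (2 : ℝ) ≤ (n : ℝ) := by exact_mod_cast hn
    linarith
  set c : ℝ := ((n : ℝ) - 1) * lam with hc_def
  have hc : 0 < c := mul_pos (by linarith) hlam
  have hc0 : c ≠ 0 := ne_of_gt hc
  set E : ℝ → ℝ := fun t => 1 - Real.exp (-(c * t)) with hE
  -- derivative of E at 0 is c
  have hder : HasDerivAt E c 0 := by
    have h1 : HasDerivAt (fun t : ℝ => Real.exp (-(c * t)))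
        (Real.exp (-(c * 0)) * (-c)) 0 := by
      have h0 : HasDerivAt (fun t : ℝ => -(c * t)) (-c) 0 := by
        simpa using ((hasDerivAt_id (0 : ℝ)).const_mul c).fun_neg
      exact h0.exp
    have h2 := (hasDerivAt_const (0 : ℝ) (1 : ℝ)).fun_sub h1
    simpa [hE] using h2
  -- slope limit: E t / t → c on punctured nhds, restrict to Ioi
  have hslope : Tendsto (fun t => E t / t) (nhdsWithin 0 (Set.Ioi 0)) (nhds c) := by
    have := hasDerivAt_iff_tendsto_slope.mp hder
    have h' : Tendsto (slope E 0) (nhdsWithin 0 (Set.Ioi 0)) (nhds c) :=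
      this.mono_left (nhdsWithin_mono _ (fun x hx => by
        simp only [Set.mem_compl_iff, Set.mem_singleton_iff]
        exact ne_of_gt hx))
    refine h'.congr (fun t => ?_)
    simp [slope_def_field, hE]
  have hrat : Tendsto (fun t => t / E t) (nhdsWithin 0 (Set.Ioi 0)) (nhds (1 / c)) := by
    have h := hslope.inv₀ hc0
    have h2 : Tendsto (fun t => t / E t) (nhdsWithin 0 (Set.Ioi 0)) (nhds c⁻¹) :=
      h.congr fun t => by rw [inv_div]
    simpa [one_div] using h2
  have hE0 : Tendsto E (nhdsWithin 0 (Set.Ioi 0)) (nhds 0) := by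
    have hcont : Continuous E := by
      simp only [hE]
      fun_prop
    have := hcont.tendsto 0
    have h0 : E 0 = 0 := by simp [hE]
    rw [h0] at this
    exact this.mono_left nhdsWithin_le_nhds
  have hg : Tendsto (fun t => lam ^ 2 * (1 / ((n : ℝ) * lam) + E t / c))
      (nhdsWithin 0 (Set.Ioi 0)) (nhds (lam ^ 2 * (1 / ((n : ℝ) * lam) + 0 / c))) :=
    tendsto_const_nhds.mul (tendsto_const_nhds.add (hE0.div_const c))
  have hmain := hg.mul hrat
  have hval : lam ^ 2 * (1 / ((n : ℝ) * lam) + 0 / c) * (1 / c)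
      = 1 / ((n : ℝ) * ((n : ℝ) - 1)) := by
    have h2 : (2 : ℝ) ≤ (n : ℝ) := by exact_mod_cast hn
    have hnne : (n : ℝ) ≠ 0 := by linarith
    have hln : lam ≠ 0 := ne_of_gt hlam
    have hn1' : (n : ℝ) - 1 ≠ 0 := by linarith
    field_simp [hc_def]
    ring
  rw [hval] at hmain
  refine hmain.congr (fun t => ?_)
  simp only [hE]
  ring
end
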